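/- arXiv:2111.03964 — 7 statements merged into one kernel-verified Lean document; each statement's English description precedes it below -/
import Mathlib

section
/- Fix an integer n ≥ 2 and for k = 1,…,n let u_k denote the k-th elementary symmetric polynomial in the squares p_1²,…,p_n². For each i,j ∈ {1,…,n} define the rational function G^{ij}(p) := Σ_{k≠l} (1/(p_k p_l)) (∂u_i/∂p_k)(∂u_j/∂p_l) (sum over ordered pairs k ≠ l in {1,…,n}). Then G^{ij} is a polynomial in p_1,…,p_n (all denominators cancel), it is homogeneous of degree 2i+2j−4, and it is invariant under every signed permutation of the variables p_1,…,p_n (i.e., under the action of B_n). Moreover G^{11}(p) = 4(n²−n) identically. -/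
open MvPolynomial

/-- `uB n k` is the `k`-th elementary symmetric polynomial in the squares
`p_1², …, p_n²`, as a polynomial in `p_1, …, p_n`. -/
noncomputable def uB (n k : ℕ) : MvPolynomial (Fin n) ℚ :=
  MvPolynomial.bind₁ (fun i => X i ^ 2) (MvPolynomial.esymm (Fin n) ℚ k)

/-- The field of rational functions in `p_1, …, p_n` over `ℚ`. -/
noncomputable abbrev RatFieldB (n : ℕ) := FractionRing (MvPolynomial (Fin n) ℚ)

/-- The cometric written in the invariant coordinates:
`G^{ij}(p) = Σ_{k ≠ l} (1/(p_k p_l)) (∂u_i/∂p_k)(∂u_j/∂p_l)`,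
a priori a rational function. -/
noncomputable def GB (n : ℕ) (i j : ℕ) : RatFieldB n :=
  ∑ k : Fin n, ∑ l : Fin n,
    if k = l then 0 else
      (algebraMap (MvPolynomial (Fin n) ℚ) (RatFieldB n) (pderiv k (uB n i)) *
        algebraMap (MvPolynomial (Fin n) ℚ) (RatFieldB n) (pderiv l (uB n j))) /
      (algebraMap (MvPolynomial (Fin n) ℚ) (RatFieldB n) (X k) *
        algebraMap (MvPolynomial (Fin n) ℚ) (RatFieldB n) (X l))

open Finset

/-- Auxiliary: the `(i-1)`-th elementary symmetric polynomial in the squares of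
all variables except `p_k`. -/
noncomputable def DD (n i : ℕ) (k : Fin n) : MvPolynomial (Fin n) ℚ :=
  ∑ s ∈ ((univ : Finset (Fin n)).erase k).powersetCard (i - 1), ∏ a ∈ s, X a ^ 2

lemma uB_eq (n i : ℕ) :
    uB n i = ∑ s ∈ powersetCard i (univ : Finset (Fin n)), ∏ a ∈ s, X a ^ 2 := by
  simp [uB, MvPolynomial.esymm, map_sum, map_prod]

lemma pderiv_prod_sq {n : ℕ} (k : Fin n) (s : Finset (Fin n)) :
    pderiv k (∏ a ∈ s, X a ^ 2 : MvPolynomial (Fin n) ℚ) =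
      if k ∈ s then C 2 * X k * ∏ a ∈ s.erase k, X a ^ 2 else 0 := by
  induction s using Finset.induction with
  | empty => simp
  | @insert b s hb ih =>
    rw [Finset.prod_insert hb, pderiv_mul, ih]
    by_cases hbk : b = k
    · subst hbk
      simp only [hb, if_false, mul_zero, add_zero, Finset.erase_insert hb,
        Finset.mem_insert_self, if_true, pderiv_pow, pderiv_X_self]
      rw [map_ofNat (C : ℚ →+* MvPolynomial (Fin n) ℚ) 2]; ring
    · have hzero : pderiv k ((X b : MvPolynomial (Fin n) ℚ) ^ 2) = 0 := by
        simp [pderiv_pow, pderiv_X, Pi.single_apply, hbk]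
      by_cases hks : k ∈ s
      · have hbe : b ∉ s.erase k := fun h => hb (Finset.mem_of_mem_erase h)
        rw [hzero, if_pos hks, if_pos (Finset.mem_insert_of_mem hks),
          Finset.erase_insert_of_ne hbk, Finset.prod_insert hbe]
        ring
      · rw [hzero, if_neg hks, if_neg (by
          simp only [Finset.mem_insert, not_or]
          exact ⟨fun h => hbk h.symm, hks⟩)]
        ring

lemma pderiv_uB (n : ℕ) {i : ℕ} (hi : 1 ≤ i) (k : Fin n) :
    pderiv k (uB n i) = C 2 * X k * DD n i k := by
  obtain ⟨m, rfl⟩ := Nat.exists_eq_add_of_le hi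
  rw [uB_eq, map_sum]
  simp only [pderiv_prod_sq]
  rw [Finset.sum_ite, Finset.sum_const_zero, add_zero, DD, Finset.mul_sum]
  have : 1 + m - 1 = m := by omega
  rw [this]
  refine Finset.sum_nbij' (fun s => s.erase k) (fun t => insert k t) ?_ ?_ ?_ ?_ ?_
  · intro s hs
    simp only [Finset.mem_filter, Finset.mem_powersetCard] at hs
    rw [Finset.mem_powersetCard]
    exact ⟨Finset.erase_subset_erase _ hs.1.1,
      by rw [Finset.card_erase_of_mem hs.2, hs.1.2]; omega⟩
  · intro t ht
    rw [Finset.mem_powersetCard] at ht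
    have hkt : k ∉ t := fun h => (Finset.mem_erase.mp (ht.1 h)).1 rfl
    simp only [Finset.mem_filter, Finset.mem_powersetCard]
    exact ⟨⟨Finset.subset_univ _, by rw [Finset.card_insert_of_notMem hkt, ht.2]; omega⟩,
      Finset.mem_insert_self _ _⟩
  · intro s hs
    simp only [Finset.mem_filter] at hs
    exact Finset.insert_erase hs.2
  · intro t ht
    rw [Finset.mem_powersetCard] at ht
    have hkt : k ∉ t := fun h => (Finset.mem_erase.mp (ht.1 h)).1 rfl
    exact Finset.erase_insert hkt
  · intro s _
    rfl

/-- The polynomial candidate for `G^{ij}`. -/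
noncomputable def PP (n i j : ℕ) : MvPolynomial (Fin n) ℚ :=
  ∑ k : Fin n, ∑ l : Fin n, if k = l then 0 else C 4 * DD n i k * DD n j l

lemma algebraMap_PP (n : ℕ) {i j : ℕ} (hi : 1 ≤ i) (hj : 1 ≤ j) :
    algebraMap (MvPolynomial (Fin n) ℚ) (RatFieldB n) (PP n i j) = GB n i j := by
  rw [PP, GB, map_sum]
  refine Finset.sum_congr rfl fun k _ => ?_
  rw [map_sum]
  refine Finset.sum_congr rfl fun l _ => ?_
  split_ifs with h
  · simp
  · rw [pderiv_uB n hi, pderiv_uB n hj]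
    have hk : algebraMap (MvPolynomial (Fin n) ℚ) (RatFieldB n) (X k) ≠ 0 := by
      rw [Ne, IsFractionRing.to_map_eq_zero_iff]
      exact MvPolynomial.X_ne_zero k
    have hl : algebraMap (MvPolynomial (Fin n) ℚ) (RatFieldB n) (X l) ≠ 0 := by
      rw [Ne, IsFractionRing.to_map_eq_zero_iff]
      exact MvPolynomial.X_ne_zero l
    rw [eq_div_iff (mul_ne_zero hk hl), ← map_mul, ← map_mul, ← map_mul]
    refine congrArg (algebraMap (MvPolynomial (Fin n) ℚ) (RatFieldB n)) ?_
    have h4 : (C 4 : MvPolynomial (Fin n) ℚ) = C 2 * C 2 := by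
      rw [← C_mul]; norm_num
    rw [h4]; ring

lemma DD_homog (n i : ℕ) (k : Fin n) : (DD n i k).IsHomogeneous (2 * (i - 1)) := by
  refine IsHomogeneous.sum _ _ _ fun s hs => ?_
  rw [Finset.mem_powersetCard] at hs
  have h : ((∏ a ∈ s, X a ^ 2 : MvPolynomial (Fin n) ℚ)).IsHomogeneous (∑ _a ∈ s, (2 : ℕ)) :=
    IsHomogeneous.prod s (fun a => X a ^ 2) (fun _ => (2 : ℕ))
      fun a _ => isHomogeneous_X_pow a 2
  simpa [Finset.sum_const, hs.2, mul_comm] using h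

lemma PP_homog (n : ℕ) {i j : ℕ} (hi : 1 ≤ i) (hj : 1 ≤ j) :
    (PP n i j).IsHomogeneous (2 * i + 2 * j - 4) := by
  refine IsHomogeneous.sum _ _ _ fun k _ => IsHomogeneous.sum _ _ _ fun l _ => ?_
  split_ifs with h
  · exact isHomogeneous_zero _ _ _
  · have : (C 4 * DD n i k * DD n j l).IsHomogeneous (0 + 2 * (i - 1) + 2 * (j - 1)) :=
      ((isHomogeneous_C _ 4).mul (DD_homog n i k)).mul (DD_homog n j l)
    convert this using 1
    omega

lemma aeval_DD {n : ℕ} (i : ℕ) (σ : Equiv.Perm (Fin n)) (ε : Fin n → ℚ)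
    (hε : ∀ a, ε a = 1 ∨ ε a = -1) (k : Fin n) :
    MvPolynomial.aeval (fun a => MvPolynomial.C (ε a) * X (σ a)) (DD n i k) =
      DD n i (σ k) := by
  have hsq : ∀ a : Fin n, (C (ε a) * X (σ a)) ^ 2 = (X (σ a) : MvPolynomial (Fin n) ℚ) ^ 2 := by
    intro a
    rcases hε a with h | h <;> rw [mul_pow, ← C_pow, h] <;> norm_num
  rw [DD, map_sum, DD]
  have key : ∀ s : Finset (Fin n),
      MvPolynomial.aeval (R := ℚ) (fun a => MvPolynomial.C (ε a) * X (σ a)) (∏ a ∈ s, X a ^ 2) =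
        ∏ a ∈ s, (X (σ a) : MvPolynomial (Fin n) ℚ) ^ 2 := by
    intro s
    rw [map_prod]
    exact Finset.prod_congr rfl fun a _ => by rw [map_pow, aeval_X, hsq]
  simp only [key]
  refine Finset.sum_nbij' (fun s => s.image σ) (fun t => t.image σ.symm) ?_ ?_ ?_ ?_ ?_
  · intro s hs
    rw [Finset.mem_powersetCard] at hs ⊢
    constructor
    · intro b hb
      obtain ⟨a, ha, rfl⟩ := Finset.mem_image.mp hb
      have := Finset.mem_erase.mp (hs.1 ha)
      exact Finset.mem_erase.mpr ⟨fun h => this.1 (σ.injective h), Finset.mem_univ _⟩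
    · rw [Finset.card_image_of_injective _ σ.injective, hs.2]
  · intro t ht
    rw [Finset.mem_powersetCard] at ht ⊢
    constructor
    · intro a ha
      obtain ⟨b, hb, rfl⟩ := Finset.mem_image.mp ha
      have := Finset.mem_erase.mp (ht.1 hb)
      refine Finset.mem_erase.mpr ⟨fun h => this.1 ?_, Finset.mem_univ _⟩
      rw [← h]; simp
    · rw [Finset.card_image_of_injective _ σ.symm.injective, ht.2]
  · intro s _
    simp [Finset.image_image]
  · intro t _
    simp [Finset.image_image]
  · intro s _
    exact (Finset.prod_image (f := fun b => (X b : MvPolynomial (Fin n) ℚ) ^ 2) (g := ⇑σ)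
      (fun a _ b _ h => σ.injective h)).symm

lemma aeval_PP {n : ℕ} (i j : ℕ) (σ : Equiv.Perm (Fin n)) (ε : Fin n → ℚ)
    (hε : ∀ a, ε a = 1 ∨ ε a = -1) :
    MvPolynomial.aeval (fun a => MvPolynomial.C (ε a) * X (σ a)) (PP n i j) = PP n i j := by
  rw [PP, map_sum]
  have step : ∀ k : Fin n,
      MvPolynomial.aeval (fun a => MvPolynomial.C (ε a) * X (σ a))
        (∑ l : Fin n, if k = l then 0 else C 4 * DD n i k * DD n j l) =
      ∑ l : Fin n, if k = l then 0 else C 4 * DD n i (σ k) * DD n j (σ l) := by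
    intro k
    rw [map_sum]
    refine Finset.sum_congr rfl fun l _ => ?_
    split_ifs with h
    · simp
    · rw [map_mul, map_mul, aeval_DD i σ ε hε, aeval_DD j σ ε hε, aeval_C]
      simp [MvPolynomial.algebraMap_eq]
  simp only [step]
  refine Fintype.sum_equiv σ _ _ fun k => ?_
  refine Fintype.sum_equiv σ _ _ fun l => ?_
  simp [σ.injective.eq_iff]

lemma PP_one (n : ℕ) (hn : 2 ≤ n) :
    PP n 1 1 = MvPolynomial.C (4 * ((n : ℚ) ^ 2 - n)) := by
  have hDD : ∀ k : Fin n, DD n 1 k = 1 := by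
    intro k; simp [DD]
  have hrow : ∀ k : Fin n,
      (∑ l : Fin n, if k = l then 0 else C 4 * DD n 1 k * DD n 1 l) =
        (n - 1 : ℕ) • (C 4 : MvPolynomial (Fin n) ℚ) := by
    intro k
    simp only [hDD, mul_one]
    rw [Finset.sum_ite, Finset.sum_const_zero, zero_add, Finset.sum_const]
    congr 1
    have hfe : Finset.filter (fun l => ¬ k = l) Finset.univ = Finset.univ.erase k := by
      ext l; simp [eq_comm]
    rw [hfe, Finset.card_erase_of_mem (Finset.mem_univ k), Finset.card_univ, Fintype.card_fin]
  rw [PP]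
  simp only [hrow, Finset.sum_const, Finset.card_univ, Fintype.card_fin, smul_smul]
  rw [nsmul_eq_mul, ← map_natCast (C : ℚ →+* MvPolynomial (Fin n) ℚ) (n * (n - 1)), ← C_mul]
  congr 1
  push_cast [Nat.cast_sub (by omega : 1 ≤ n)]
  ring

/-- each `G^{ij}` is a polynomial in `p_1, …, p_n` (all denominators
cancel), homogeneous of degree `2i + 2j - 4`, invariant under every signed
permutation of the variables; moreover `G^{11} = 4(n² - n)` identically. -/
theorem GB_polynomial_homogeneous_invariant (n : ℕ) (hn : 2 ≤ n)
    (i j : ℕ) (hi1 : 1 ≤ i) (hin : i ≤ n) (hj1 : 1 ≤ j) (hjn : j ≤ n) :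
    (∃ P : MvPolynomial (Fin n) ℚ,
        algebraMap (MvPolynomial (Fin n) ℚ) (RatFieldB n) P = GB n i j ∧
        P.IsHomogeneous (2 * i + 2 * j - 4) ∧
        ∀ (σ : Equiv.Perm (Fin n)) (ε : Fin n → ℚ),
          (∀ a, ε a = 1 ∨ ε a = -1) →
          MvPolynomial.aeval (fun a => MvPolynomial.C (ε a) * X (σ a)) P = P) ∧
    GB n 1 1 =
      algebraMap (MvPolynomial (Fin n) ℚ) (RatFieldB n)
        (MvPolynomial.C (4 * ((n : ℚ) ^ 2 - n))) := by
  refine ⟨⟨PP n i j, algebraMap_PP n hi1 hj1, PP_homog n hi1 hj1,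
    fun σ ε hε => aeval_PP i j σ ε hε⟩, ?_⟩
  rw [← algebraMap_PP n le_rfl le_rfl, PP_one n hn]
end

section
/- Fix an integer n ≥ 2 and define g_{ij}(p) := (1/(n−1) − δ_{ij}) p_i p_j and g^{ij}(p) := (1−δ^{ij})/(p_i p_j). Then for all i,j,k ∈ {1,…,n} and all p ∈ ℝⁿ with all coordinates nonzero, the Christoffel symbols of the Levi-Civita connection of g, namely Γ^k_{ij}(p) := (1/2) Σ_{m=1}^n g^{mk}(p) (∂g_{im}/∂p_j + ∂g_{jm}/∂p_i − ∂g_{ij}/∂p_m)(p), are given by: Γ^k_{ij}(p) = 1/p_i if i = j = k, and Γ^k_{ij}(p) = 0 otherwise. -/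
/-- The covariant metric `g_{ij}(p) = (1/(n-1) - δ_{ij}) p_i p_j`. -/
noncomputable def glow (n : ℕ) (p : Fin n → ℝ) (i j : Fin n) : ℝ :=
  (1 / ((n : ℝ) - 1) - if i = j then 1 else 0) * p i * p j

/-- The contravariant metric `g^{ij}(p) = (1 - δ^{ij})/(p_i p_j)`. -/
noncomputable def gup (n : ℕ) (p : Fin n → ℝ) (i j : Fin n) : ℝ :=
  (if i = j then 0 else 1) / (p i * p j)

/-- Partial derivative `∂f/∂p_c` of a function of `n` real variables. -/
noncomputable def pd {n : ℕ} (c : Fin n) (f : (Fin n → ℝ) → ℝ)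
    (p : Fin n → ℝ) : ℝ :=
  deriv (fun t => f (Function.update p c t)) (p c)

lemma pd_glow (n : ℕ) (p : Fin n → ℝ) (a b c : Fin n) :
    pd c (fun q => glow n q a b) p =
    (1 / ((n : ℝ) - 1) - if a = b then 1 else 0) *
      ((if a = c then p b else 0) + (if b = c then p a else 0)) := by
  set C := (1 / ((n : ℝ) - 1) - if a = b then 1 else 0) with hC
  unfold pd glow
  rw [← hC]
  simp only [Function.update_apply]
  rcases eq_or_ne a c with ha | ha <;> rcases eq_or_ne b c with hb | hb
  · simp only [if_pos ha, if_pos hb]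
    have h : HasDerivAt (fun t : ℝ => C * t * t) (C * 1 * p c + C * p c * 1) (p c) :=
      ((hasDerivAt_id (p c)).const_mul C).mul (hasDerivAt_id (p c))
    rw [h.deriv]; subst ha; subst hb; ring
  · simp only [if_pos ha, if_neg hb]
    have h : HasDerivAt (fun t : ℝ => C * t * p b) (C * 1 * p b) (p c) :=
      ((hasDerivAt_id (p c)).const_mul C).mul_const (p b)
    rw [h.deriv]; subst ha; ring
  · simp only [if_neg ha, if_pos hb]
    have h : HasDerivAt (fun t : ℝ => C * p a * t) (C * p a * 1) (p c) :=
      (hasDerivAt_id (p c)).const_mul (C * p a)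
    rw [h.deriv]; subst hb; ring
  · simp only [if_neg ha, if_neg hb]
    simp

lemma christoffel_summand (n : ℕ) (hn : 2 ≤ n) (p : Fin n → ℝ)
    (hp : ∀ i, p i ≠ 0) (i j k m : Fin n) :
    gup n p m k *
      (pd j (fun q => glow n q i m) p + pd i (fun q => glow n q j m) p -
        pd m (fun q => glow n q i j) p) =
      if i = j then
        (if m = k then 0 else 2 * (1/((n:ℝ)-1) - if m = i then 1 else 0) / p k)
      else 0 := by
  rw [pd_glow, pd_glow, pd_glow]
  unfold gup
  by_cases hmk : m = k <;> by_cases hij : i = j <;> by_cases hmi : m = i <;>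
    by_cases hmj : m = j <;> simp_all [eq_comm] <;>
    (have hA : ((n:ℝ)-1) ≠ 0 := by
      have h2n : (2:ℝ) ≤ (n:ℝ) := by exact_mod_cast hn
      linarith
     field_simp [hA, hp m, hp k, hp i, hp j]
     ring)

/-- the Christoffel symbols of the Levi-Civita connection of
`g_{ij}(p) = (1/(n-1) - δ_{ij}) p_i p_j`, namely
`Γ^k_{ij} = (1/2) Σ_m g^{mk} (∂g_{im}/∂p_j + ∂g_{jm}/∂p_i - ∂g_{ij}/∂p_m)`,
are `1/p_i` when `i = j = k` and `0` otherwise. -/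
theorem christoffel_Bn (n : ℕ) (hn : 2 ≤ n) (p : Fin n → ℝ)
    (hp : ∀ i, p i ≠ 0) (i j k : Fin n) :
    (1 / 2) * ∑ m : Fin n, gup n p m k *
      (pd j (fun q => glow n q i m) p + pd i (fun q => glow n q j m) p -
        pd m (fun q => glow n q i j) p) =
    if i = j ∧ j = k then 1 / p i else 0 := by
  have hn1 : ((n : ℝ) - 1) ≠ 0 := by
    have h2n : (2:ℝ) ≤ (n:ℝ) := by exact_mod_cast hn
    linarith
  rw [Finset.sum_congr rfl (fun m _ => christoffel_summand n hn p hp i j k m)]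
  by_cases hij : i = j
  · subst hij
    simp only [eq_self_iff_true, if_true, true_and]
    by_cases hik : i = k
    · subst hik
      have e : ∀ m : Fin n,
          (if m = i then (0:ℝ) else 2 * (1/((n:ℝ)-1) - if m = i then 1 else 0) / p i)
          = (2 * (1/((n:ℝ)-1)) / p i) - (if m = i then 2 * (1/((n:ℝ)-1)) / p i else 0) := by
        intro m
        rcases eq_or_ne m i with h | h
        · rw [if_pos h, if_pos h]; ring
        · rw [if_neg h, if_neg h, if_neg h]; ring
      rw [Finset.sum_congr rfl (fun m _ => e m), Finset.sum_sub_distrib,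
        Finset.sum_const,
        Finset.sum_ite_eq' Finset.univ i fun _ => (2 * (1/((n:ℝ)-1)) / p i)]
      simp only [Finset.card_univ, Fintype.card_fin, Finset.mem_univ, if_pos, nsmul_eq_mul]
      field_simp [hp i]
    · rw [if_neg hik]
      have e : ∀ m : Fin n,
          (if m = k then (0:ℝ) else 2 * (1/((n:ℝ)-1) - if m = i then 1 else 0) / p k)
          = ((2 * (1/((n:ℝ)-1)) / p k) - (if m = k then 2 * (1/((n:ℝ)-1)) / p k else 0))
            - (if m = i then 2 / p k else 0) := by
        intro m
        rcases eq_or_ne m k with h | h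
        · rw [if_pos h, if_pos h, if_neg (show ¬(m = i) from fun h' => hik (h'.symm.trans h))]
          ring
        · rw [if_neg h, if_neg h]
          rcases eq_or_ne m i with h' | h'
          · rw [if_pos h', if_pos h']; ring
          · rw [if_neg h', if_neg h']; ring
      rw [Finset.sum_congr rfl (fun m _ => e m), Finset.sum_sub_distrib,
        Finset.sum_sub_distrib, Finset.sum_const,
        Finset.sum_ite_eq' Finset.univ k fun _ => (2 * (1/((n:ℝ)-1)) / p k),
        Finset.sum_ite_eq' Finset.univ i fun _ => (2 / p k)]
      simp only [Finset.card_univ, Fintype.card_fin, Finset.mem_univ, if_pos, nsmul_eq_mul]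
      field_simp [hp k]
      ring
  · simp [hij]
end

section
/- Fix an integer n ≥ 2 and define, on the set of p ∈ ℝⁿ with all coordinates nonzero, Γ^k_{ij}(p) := 1/p_i if i = j = k and Γ^k_{ij}(p) := 0 otherwise (these are the Christoffel symbols of the metric g_{ij}(p) = (1/(n−1) − δ_{ij}) p_i p_j). Then the Riemann curvature tensor of the associated connection vanishes identically: for all i,j,k,l ∈ {1,…,n} and all such p, ∂Γ^i_{lj}/∂p_k − ∂Γ^i_{kj}/∂p_l + Σ_{m=1}^n (Γ^i_{km} Γ^m_{lj} − Γ^i_{lm} Γ^m_{kj}) = 0. Hence the metric g_{ij}(p) = (1/(n−1) − δ_{ij}) p_i p_j is flat. -/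
/-- The Christoffel symbols `Γ^k_{ij}` of the metric
`g_{ij}(p) = (1/(n-1) - δ_{ij}) p_i p_j`: `Γ^k_{ij}(p) = 1/p_i` if `i = j = k`,
and `0` otherwise.  (First argument after `p` is the upper index.) -/
noncomputable def GamBn (n : ℕ) (p : Fin n → ℝ) (k i j : Fin n) : ℝ :=
  if i = j ∧ j = k then 1 / p i else 0

lemma pd_GamBn (n : ℕ) (p : Fin n → ℝ) (i j k l : Fin n) :
    pd k (fun q => GamBn n q i l j) p =
      if l = j ∧ j = i ∧ k = l then -(1 / p l ^ 2) else 0 := by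
  unfold pd GamBn
  by_cases h : l = j ∧ j = i ∧ k = l
  · obtain ⟨h1, h2, h3⟩ := h
    subst h1; subst h2; subst h3
    simp only [and_self, if_true, Function.update_self, one_div]
    rw [deriv_inv]
  · rw [if_neg h]
    by_cases h1 : l = j ∧ j = i
    · have hk : k ≠ l := fun hk => h ⟨h1.1, h1.2, hk⟩
      have heq : (fun t => if l = j ∧ j = i then 1 / Function.update p k t l else 0)
          = fun _ => 1 / p l := by
        funext t
        rw [if_pos h1, Function.update_of_ne (Ne.symm hk)]
      rw [heq]
      exact deriv_const _ _
    · have heq : (fun t => if l = j ∧ j = i then 1 / Function.update p k t l else 0)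
          = fun _ => (0 : ℝ) := by
        funext t
        rw [if_neg h1]
      rw [heq]
      exact deriv_const _ _

/-- the Riemann curvature tensor of the connection with Christoffel
symbols `Γ^i_{ii} = 1/p_i` (all others zero) vanishes identically:
`∂Γ^i_{lj}/∂p_k - ∂Γ^i_{kj}/∂p_l + Σ_m (Γ^i_{km} Γ^m_{lj} - Γ^i_{lm} Γ^m_{kj}) = 0`.
Hence the metric `g_{ij}(p) = (1/(n-1) - δ_{ij}) p_i p_j` is flat. -/
theorem curvature_vanishes_Bn (n : ℕ) (hn : 2 ≤ n) (p : Fin n → ℝ)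
    (hp : ∀ i, p i ≠ 0) (i j k l : Fin n) :
    pd k (fun q => GamBn n q i l j) p - pd l (fun q => GamBn n q i k j) p +
      ∑ m : Fin n,
        (GamBn n p i k m * GamBn n p m l j - GamBn n p i l m * GamBn n p m k j) =
    0 := by
  rw [pd_GamBn, pd_GamBn]
  have hsum : ∀ m : Fin n,
      GamBn n p i k m * GamBn n p m l j - GamBn n p i l m * GamBn n p m k j = 0 := by
    intro m
    simp only [GamBn, Fin.ext_iff]
    split_ifs
    all_goals try ring
    all_goals exfalso
    all_goals omega
  rw [Finset.sum_congr rfl (fun m _ => hsum m), Finset.sum_const_zero]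
  by_cases h : l = j ∧ j = i ∧ k = l
  · obtain ⟨rfl, rfl, rfl⟩ := h
    split_ifs
    all_goals try ring
    all_goals simp_all
  · have h2 : ¬(k = j ∧ j = i ∧ l = k) := fun ⟨a, b, c⟩ => h ⟨c.trans a, b, c.symm⟩
    rw [if_neg h, if_neg h2]
    ring
end

section
/- Fix an integer n ≥ 2, let u_k be the k-th elementary symmetric polynomial in p_1²,…,p_n², let G^{ij}(p) := Σ_{s≠k} (1/(p_s p_k)) (∂u_i/∂p_s)(∂u_j/∂p_k) (sum over ordered pairs s ≠ k), and let h(t) := Π_{l=1}^n (t + p_l²). Then in the field of rational functions in p_1,…,p_n extended by two variables x,y, the following identity holds: (x − y) · (1/4) · Σ_{i,j=1}^n G^{ij}(p) x^{n−i} y^{n−j} = (x − y) h'(x) h'(y) − h'(y) h(x) + h'(x) h(y), where h' is the derivative of h with respect to its argument. Equivalently, (1/4) Σ_{i,j=1}^n G^{ij}(p) x^{n−i} y^{n−j} = h'(x)h'(y) − (h'(y)h(x) − h'(x)h(y))/(x−y). -/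
open MvPolynomial

/-- The polynomial ring `ℚ[p_1, …, p_n, x, y]` (`x, y` are the two `Fin 2`-variables). -/
noncomputable abbrev PolyRing (n : ℕ) := MvPolynomial (Fin n ⊕ Fin 2) ℚ

/-- The field of rational functions in `p_1, …, p_n` extended by the two
variables `x, y`. -/
noncomputable abbrev FldB (n : ℕ) := FractionRing (PolyRing n)

/-- `u_k`: the `k`-th elementary symmetric polynomial in `p_1², …, p_n²`. -/
noncomputable def uB6 (n k : ℕ) : PolyRing n :=
  MvPolynomial.aeval (fun i : Fin n => (X (Sum.inl i) : PolyRing n) ^ 2)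
    (MvPolynomial.esymm (Fin n) ℚ k)

/-- The cometric in invariant coordinates:
`G^{ij}(p) = Σ_{s ≠ k} (1/(p_s p_k)) (∂u_i/∂p_s)(∂u_j/∂p_k)`, as a rational function. -/
noncomputable def GB6 (n : ℕ) (i j : ℕ) : FldB n :=
  ∑ s : Fin n, ∑ k : Fin n,
    if s = k then 0 else
      (algebraMap (PolyRing n) (FldB n) (pderiv (Sum.inl s) (uB6 n i)) *
        algebraMap (PolyRing n) (FldB n) (pderiv (Sum.inl k) (uB6 n j))) /
      (algebraMap (PolyRing n) (FldB n) (X (Sum.inl s)) *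
        algebraMap (PolyRing n) (FldB n) (X (Sum.inl k)))

/-- `h(t) = Π_{l=1}^n (t + p_l²)` as a polynomial in `t`. -/
noncomputable def hPoly6 (n : ℕ) : Polynomial (PolyRing n) :=
  ∏ l : Fin n, (Polynomial.X + Polynomial.C (X (Sum.inl l) ^ 2))

/-! ### Auxiliary lemmas -/


/-- `q_s(t_m) = Π_{l ≠ s} (t_m + p_l²)`. -/
noncomputable def qB6 (n : ℕ) (m : Fin 2) (s : Fin n) : PolyRing n :=
  ∏ l ∈ Finset.univ.erase s, (X (Sum.inr m) + (X (Sum.inl l) : PolyRing n) ^ 2)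

lemma derivFinsetProd {R ι : Type*} [CommRing R] [DecidableEq ι] (T : Finset ι)
    (f : ι → Polynomial R) :
    Polynomial.derivative (∏ i ∈ T, f i) =
      ∑ i ∈ T, (∏ j ∈ T.erase i, f j) * Polynomial.derivative (f i) := by
  induction T using Finset.induction_on with
  | empty => simp
  | @insert a T ha ih =>
    rw [Finset.prod_insert ha, Polynomial.derivative_mul, ih, Finset.sum_insert ha,
      Finset.erase_insert ha, Finset.mul_sum]
    rw [mul_comm (Polynomial.derivative (f a))]
    congr 1
    refine Finset.sum_congr rfl fun i hi => ?_
    rw [Finset.erase_insert_of_ne (by rintro rfl; exact ha hi),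
      Finset.prod_insert (fun h => ha (Finset.mem_of_mem_erase h))]
    ring

lemma hPoly6_eq (n : ℕ) :
    hPoly6 n = ∑ k ∈ Finset.range (n + 1), Polynomial.C (uB6 n k) * Polynomial.X ^ (n - k) := by
  have h := congrArg (Polynomial.map
      (MvPolynomial.aeval (fun i : Fin n => (X (Sum.inl i) : PolyRing n) ^ 2)).toRingHom)
    (MvPolynomial.prod_C_add_X_eq_sum_esymm ℚ (Fin n))
  simpa [hPoly6, uB6, Polynomial.map_prod, Polynomial.map_sum, Fintype.card_fin] using h

lemma eval_hPoly6 (n : ℕ) (m : Fin 2) :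
    Polynomial.eval (X (Sum.inr m)) (hPoly6 n) =
      ∏ l : Fin n, (X (Sum.inr m) + (X (Sum.inl l) : PolyRing n) ^ 2) := by
  simp [hPoly6, Polynomial.eval_prod]

lemma eval_deriv_hPoly6 (n : ℕ) (m : Fin 2) :
    Polynomial.eval (X (Sum.inr m)) (Polynomial.derivative (hPoly6 n)) =
      ∑ s : Fin n, qB6 n m s := by
  rw [hPoly6, derivFinsetProd]
  simp [qB6, Polynomial.eval_finset_sum, Polynomial.eval_prod, Polynomial.derivative_pow]

lemma pderiv_prod_not_mem (n : ℕ) (s : Fin n) (m : Fin 2) (T : Finset (Fin n)) (hs : s ∉ T) :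
    pderiv (Sum.inl s) (∏ l ∈ T, (X (Sum.inr m) + (X (Sum.inl l) : PolyRing n) ^ 2)) = 0 := by
  refine Finset.prod_induction _ (fun q => pderiv (Sum.inl s) q = 0)
    (fun a b ha hb => by
      show pderiv (Sum.inl s) (a * b) = 0
      rw [pderiv_mul, ha, hb]; ring) (by simp) (fun l hl => ?_)
  have : (Sum.inl s : Fin n ⊕ Fin 2) ≠ Sum.inl l := by
    simp only [ne_eq, Sum.inl.injEq]; rintro rfl; exact hs hl
  simp [pderiv_X, pderiv_pow, this, if_neg (Sum.inl_ne_inr)]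

lemma pderiv_prod_univ (n : ℕ) (s : Fin n) (m : Fin 2) :
    pderiv (Sum.inl s) (∏ l : Fin n, (X (Sum.inr m) + (X (Sum.inl l) : PolyRing n) ^ 2)) =
      2 * X (Sum.inl s) * qB6 n m s := by
  rw [← Finset.mul_prod_erase _ _ (Finset.mem_univ s), pderiv_mul,
    pderiv_prod_not_mem n s m _ (Finset.notMem_erase s _)]
  have h1 : pderiv (Sum.inl s) ((X (Sum.inr m) + (X (Sum.inl s) : PolyRing n) ^ 2)) =
      2 * X (Sum.inl s) := by
    simp [pderiv_pow, pderiv_X, if_neg (Sum.inl_ne_inr)]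
  rw [h1, qB6]; ring

lemma sum_pderiv_u (n : ℕ) (s : Fin n) (m : Fin 2) :
    ∑ i : Fin n, pderiv (Sum.inl s) (uB6 n (i.1 + 1)) * X (Sum.inr m) ^ (n - (i.1 + 1)) =
      2 * X (Sum.inl s) * qB6 n m s := by
  have key : pderiv (Sum.inl s) (Polynomial.eval (X (Sum.inr m)) (hPoly6 n)) =
      ∑ k ∈ Finset.range (n + 1),
        pderiv (Sum.inl s) (uB6 n k) * X (Sum.inr m) ^ (n - k) := by
    conv_lhs => rw [hPoly6_eq]
    rw [Polynomial.eval_finset_sum, map_sum]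
    refine Finset.sum_congr rfl fun k _ => ?_
    rw [Polynomial.eval_mul, Polynomial.eval_C, Polynomial.eval_pow, Polynomial.eval_X,
      pderiv_mul, pderiv_pow, pderiv_X]
    rw [Pi.single_eq_of_ne (Sum.inr_ne_inl)]
    ring
  have key2 : pderiv (Sum.inl s) (Polynomial.eval (X (Sum.inr m)) (hPoly6 n)) =
      2 * X (Sum.inl s) * qB6 n m s := by
    rw [eval_hPoly6, pderiv_prod_univ]
  rw [key] at key2
  rw [Finset.sum_range_succ'] at key2
  have hu0 : uB6 n 0 = 1 := by simp [uB6, MvPolynomial.esymm_zero]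
  rw [hu0, Derivation.map_one_eq_zero, zero_mul, add_zero] at key2
  rw [← key2, Fin.sum_univ_eq_sum_range (fun i => pderiv (Sum.inl s) (uB6 n (i + 1)) *
    X (Sum.inr m) ^ (n - (i + 1)))]

lemma cross6 (n : ℕ) (s : Fin n) :
    (X (Sum.inr 0) - X (Sum.inr 1)) * (qB6 n 0 s * qB6 n 1 s) =
      (∏ l : Fin n, (X (Sum.inr 0) + (X (Sum.inl l) : PolyRing n) ^ 2)) * qB6 n 1 s -
        qB6 n 0 s * ∏ l : Fin n, (X (Sum.inr 1) + (X (Sum.inl l) : PolyRing n) ^ 2) := by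
  rw [← Finset.mul_prod_erase _ _ (Finset.mem_univ s),
    ← Finset.mul_prod_erase _ _ (Finset.mem_univ s)]
  unfold qB6; ring

lemma sum4_comm {M : Type*} [AddCommMonoid M] {α : Type*} [Fintype α]
    (t : α → α → α → α → M) :
    ∑ i : α, ∑ j : α, ∑ s : α, ∑ k : α, t i j s k
      = ∑ s : α, ∑ k : α, ∑ i : α, ∑ j : α, t i j s k := by
  calc ∑ i : α, ∑ j : α, ∑ s : α, ∑ k : α, t i j s k
      = ∑ i : α, ∑ s : α, ∑ j : α, ∑ k : α, t i j s k :=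
        Finset.sum_congr rfl fun i _ => Finset.sum_comm
    _ = ∑ s : α, ∑ i : α, ∑ j : α, ∑ k : α, t i j s k := Finset.sum_comm
    _ = ∑ s : α, ∑ i : α, ∑ k : α, ∑ j : α, t i j s k :=
        Finset.sum_congr rfl fun s _ => Finset.sum_congr rfl fun i _ => Finset.sum_comm
    _ = ∑ s : α, ∑ k : α, ∑ i : α, ∑ j : α, t i j s k :=
        Finset.sum_congr rfl fun s _ => Finset.sum_comm

lemma offdiag_sum {n : ℕ} (f : Fin n → FldB n) (s : Fin n) :
    ∑ k : Fin n, (if s = k then 0 else f k) = (∑ k : Fin n, f k) - f s := by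
  calc ∑ k : Fin n, (if s = k then 0 else f k)
      = ∑ k : Fin n, (f k - if s = k then f k else 0) :=
        Finset.sum_congr rfl fun k _ => by by_cases h : s = k <;> simp [h]
    _ = (∑ k : Fin n, f k) - ∑ k : Fin n, (if s = k then f k else 0) := Finset.sum_sub_distrib _ _
    _ = (∑ k : Fin n, f k) - f s := by rw [Finset.sum_ite_eq]; simp

set_option maxHeartbeats 1000000 in
/-- the generating-function identity for the intersection form:
`(x - y) (1/4) Σ_{i,j=1}^n G^{ij}(p) x^{n-i} y^{n-j}
  = (x - y) h'(x) h'(y) - h'(y) h(x) + h'(x) h(y)`. -/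
theorem generating_function_intersection_form (n : ℕ) (hn : 2 ≤ n) :
    letI toF := algebraMap (PolyRing n) (FldB n)
    letI x : FldB n := toF (X (Sum.inr 0))
    letI y : FldB n := toF (X (Sum.inr 1))
    letI hx : FldB n := toF (Polynomial.eval (X (Sum.inr 0)) (hPoly6 n))
    letI hy : FldB n := toF (Polynomial.eval (X (Sum.inr 1)) (hPoly6 n))
    letI h'x : FldB n :=
      toF (Polynomial.eval (X (Sum.inr 0)) (Polynomial.derivative (hPoly6 n)))
    letI h'y : FldB n :=
      toF (Polynomial.eval (X (Sum.inr 1)) (Polynomial.derivative (hPoly6 n)))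
    (x - y) * (1 / 4) *
        ∑ i : Fin n, ∑ j : Fin n,
          GB6 n (i.1 + 1) (j.1 + 1) * x ^ (n - (i.1 + 1)) * y ^ (n - (j.1 + 1)) =
      (x - y) * h'x * h'y - h'y * hx + h'x * hy := by
  set toF := algebraMap (PolyRing n) (FldB n) with htoF
  have hP : ∀ s : Fin n, toF (X (Sum.inl s)) ≠ 0 := by
    intro s
    simp only [htoF, ne_eq, IsFractionRing.to_map_eq_zero_iff]
    exact MvPolynomial.X_ne_zero _
  -- the generating sums of the derivatives of the u's
  have hDsum : ∀ (s : Fin n) (m : Fin 2),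
      (∑ i : Fin n, toF (pderiv (Sum.inl s) (uB6 n (i.1 + 1))) *
          toF (X (Sum.inr m)) ^ (n - (i.1 + 1)))
        = 2 * toF (X (Sum.inl s)) * toF (qB6 n m s) := by
    intro s m
    calc (∑ i : Fin n, toF (pderiv (Sum.inl s) (uB6 n (i.1 + 1))) *
            toF (X (Sum.inr m)) ^ (n - (i.1 + 1)))
        = toF (∑ i : Fin n, pderiv (Sum.inl s) (uB6 n (i.1 + 1)) *
            X (Sum.inr m) ^ (n - (i.1 + 1))) := by
          rw [map_sum]
          exact Finset.sum_congr rfl fun i _ => by rw [map_mul, map_pow]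
      _ = 2 * toF (X (Sum.inl s)) * toF (qB6 n m s) := by
          rw [sum_pderiv_u n s m, map_mul, map_mul, map_ofNat]
  -- the off-diagonal summand
  have hGterm : ∀ s k : Fin n, s ≠ k →
      (∑ i : Fin n, ∑ j : Fin n,
        (toF (pderiv (Sum.inl s) (uB6 n (i.1 + 1))) *
            toF (pderiv (Sum.inl k) (uB6 n (j.1 + 1)))) /
          (toF (X (Sum.inl s)) * toF (X (Sum.inl k))) *
          toF (X (Sum.inr 0)) ^ (n - (i.1 + 1)) * toF (X (Sum.inr 1)) ^ (n - (j.1 + 1)))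
        = 4 * toF (qB6 n 0 s) * toF (qB6 n 1 k) := by
    intro s k hsk
    have expand : (∑ i : Fin n, toF (pderiv (Sum.inl s) (uB6 n (i.1 + 1))) *
            toF (X (Sum.inr 0)) ^ (n - (i.1 + 1))) *
          (∑ j : Fin n, toF (pderiv (Sum.inl k) (uB6 n (j.1 + 1))) *
            toF (X (Sum.inr 1)) ^ (n - (j.1 + 1))) /
          (toF (X (Sum.inl s)) * toF (X (Sum.inl k)))
        = ∑ i : Fin n, ∑ j : Fin n,
            (toF (pderiv (Sum.inl s) (uB6 n (i.1 + 1))) *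
                toF (pderiv (Sum.inl k) (uB6 n (j.1 + 1)))) /
              (toF (X (Sum.inl s)) * toF (X (Sum.inl k))) *
              toF (X (Sum.inr 0)) ^ (n - (i.1 + 1)) * toF (X (Sum.inr 1)) ^ (n - (j.1 + 1)) := by
      rw [Finset.sum_mul_sum, Finset.sum_div]
      refine Finset.sum_congr rfl fun i _ => ?_
      rw [Finset.sum_div]
      refine Finset.sum_congr rfl fun j _ => ?_
      ring
    rw [← expand, hDsum s 0, hDsum k 1,
      div_eq_iff (mul_ne_zero (hP s) (hP k))]
    ring
  -- the main double sum
  have main : (∑ i : Fin n, ∑ j : Fin n,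
      GB6 n (i.1 + 1) (j.1 + 1) * toF (X (Sum.inr 0)) ^ (n - (i.1 + 1)) *
        toF (X (Sum.inr 1)) ^ (n - (j.1 + 1)))
      = 4 * ((∑ s : Fin n, toF (qB6 n 0 s)) * (∑ k : Fin n, toF (qB6 n 1 k))) -
        4 * ∑ s : Fin n, toF (qB6 n 0 s) * toF (qB6 n 1 s) := by
    calc (∑ i : Fin n, ∑ j : Fin n,
        GB6 n (i.1 + 1) (j.1 + 1) * toF (X (Sum.inr 0)) ^ (n - (i.1 + 1)) *
          toF (X (Sum.inr 1)) ^ (n - (j.1 + 1)))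
        = ∑ i : Fin n, ∑ j : Fin n, ∑ s : Fin n, ∑ k : Fin n,
            ((if s = k then 0 else
              (toF (pderiv (Sum.inl s) (uB6 n (i.1 + 1))) *
                  toF (pderiv (Sum.inl k) (uB6 n (j.1 + 1)))) /
                (toF (X (Sum.inl s)) * toF (X (Sum.inl k)))) *
              toF (X (Sum.inr 0)) ^ (n - (i.1 + 1)) *
              toF (X (Sum.inr 1)) ^ (n - (j.1 + 1))) := by
          simp only [GB6, Finset.sum_mul, htoF]
      _ = ∑ s : Fin n, ∑ k : Fin n, ∑ i : Fin n, ∑ j : Fin n,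
            ((if s = k then 0 else
              (toF (pderiv (Sum.inl s) (uB6 n (i.1 + 1))) *
                  toF (pderiv (Sum.inl k) (uB6 n (j.1 + 1)))) /
                (toF (X (Sum.inl s)) * toF (X (Sum.inl k)))) *
              toF (X (Sum.inr 0)) ^ (n - (i.1 + 1)) *
              toF (X (Sum.inr 1)) ^ (n - (j.1 + 1))) := sum4_comm _
      _ = ∑ s : Fin n, ∑ k : Fin n,
            (if s = k then 0 else 4 * toF (qB6 n 0 s) * toF (qB6 n 1 k)) := by
          refine Finset.sum_congr rfl fun s _ => Finset.sum_congr rfl fun k _ => ?_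
          by_cases h : s = k
          · simp [h]
          · simp only [if_neg h]
            exact hGterm s k h
      _ = ∑ s : Fin n,
            ((∑ k : Fin n, 4 * toF (qB6 n 0 s) * toF (qB6 n 1 k)) -
              4 * toF (qB6 n 0 s) * toF (qB6 n 1 s)) :=
          Finset.sum_congr rfl fun s _ => offdiag_sum _ s
      _ = 4 * ((∑ s : Fin n, toF (qB6 n 0 s)) * (∑ k : Fin n, toF (qB6 n 1 k))) -
            4 * ∑ s : Fin n, toF (qB6 n 0 s) * toF (qB6 n 1 s) := by
          rw [Finset.sum_sub_distrib]
          congr 1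
          · rw [Finset.sum_mul_sum, Finset.mul_sum]
            refine Finset.sum_congr rfl fun s _ => ?_
            rw [Finset.mul_sum]
            exact Finset.sum_congr rfl fun k _ => by ring
          · rw [Finset.mul_sum]
            exact Finset.sum_congr rfl fun s _ => by ring
  have hderiv : ∀ m : Fin 2,
      toF (Polynomial.eval (X (Sum.inr m)) (Polynomial.derivative (hPoly6 n)))
        = ∑ s : Fin n, toF (qB6 n m s) := by
    intro m
    rw [eval_deriv_hPoly6, map_sum]
  -- the cross term
  have hC : (toF (X (Sum.inr 0)) - toF (X (Sum.inr 1))) *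
        ∑ s : Fin n, toF (qB6 n 0 s) * toF (qB6 n 1 s)
      = toF (Polynomial.eval (X (Sum.inr 0)) (hPoly6 n)) * (∑ s : Fin n, toF (qB6 n 1 s)) -
        (∑ s : Fin n, toF (qB6 n 0 s)) * toF (Polynomial.eval (X (Sum.inr 1)) (hPoly6 n)) := by
    calc (toF (X (Sum.inr 0)) - toF (X (Sum.inr 1))) *
          ∑ s : Fin n, toF (qB6 n 0 s) * toF (qB6 n 1 s)
        = ∑ s : Fin n, (toF (X (Sum.inr 0)) - toF (X (Sum.inr 1))) *
            (toF (qB6 n 0 s) * toF (qB6 n 1 s)) := Finset.mul_sum _ _ _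
      _ = ∑ s : Fin n,
            (toF (Polynomial.eval (X (Sum.inr 0)) (hPoly6 n)) * toF (qB6 n 1 s) -
              toF (qB6 n 0 s) * toF (Polynomial.eval (X (Sum.inr 1)) (hPoly6 n))) := by
          refine Finset.sum_congr rfl fun s _ => ?_
          rw [eval_hPoly6, eval_hPoly6]
          simp only [← map_mul, ← map_sub]
          exact congrArg toF (cross6 n s)
      _ = toF (Polynomial.eval (X (Sum.inr 0)) (hPoly6 n)) * (∑ s : Fin n, toF (qB6 n 1 s)) -
            (∑ s : Fin n, toF (qB6 n 0 s)) *
              toF (Polynomial.eval (X (Sum.inr 1)) (hPoly6 n)) := by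
          rw [Finset.sum_sub_distrib, ← Finset.mul_sum, ← Finset.sum_mul]
  rw [main, hderiv 0, hderiv 1]
  linear_combination -hC
end

section
/- Fix an integer n ≥ 2, let R be a commutative ring and let u_0, u_1, …, u_n ∈ R, with the convention u_m := 0 for m < 0. Set h(x) := Σ_{k=0}^n u_k x^{n−k} ∈ R[x]. Then the following identity holds in R[x,y]: (x − y) · Σ_{i,j=1}^n (2n − i − j) u_{i+j−n−1} x^{n−i} y^{n−j} = x h'(x) − y h'(y) − h(x) + h(y), where h' denotes the formal derivative of h. (This identifies the generating function of the Saito bilinear form η^{ij} = 4(2n−i−j) u_{i+j−n−1}, obtained by differentiating the generating function of the intersection form with respect to u_{n−1}.) -/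
open Finset

noncomputable def hGen (R : Type*) [CommRing R] (n : ℕ) (u : ℤ → R) :
    Polynomial R :=
  ∑ k ∈ Finset.range (n + 1), Polynomial.C (u k) * Polynomial.X ^ (n - k)

private lemma sum_Icc_reindex' {A : Type*} [AddCommMonoid A] (n : ℕ) (f : ℕ → A) :
    ∑ i ∈ Icc 1 n, f i = ∑ a ∈ range n, f (n - a) := by
  refine Finset.sum_nbij' (fun i => n - i) (fun a => n - a) ?_ ?_ ?_ ?_ ?_ <;>
      intro i hi <;> simp only [mem_Icc, mem_range] at *
  · omega
  · omega
  · omega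
  · omega
  · congr 1; omega

private lemma tri_sum' {A : Type*} [AddCommMonoid A] (n : ℕ) (f : ℕ → ℕ → A) :
    ∑ a ∈ range n, ∑ b ∈ range (n - a), f a b
      = ∑ s ∈ range n, ∑ a ∈ range (s + 1), f a (s - a) := by
  rw [Finset.sum_sigma', Finset.sum_sigma']
  refine Finset.sum_nbij' (fun p => ⟨p.1 + p.2, p.1⟩) (fun q => ⟨q.2, q.1 - q.2⟩) ?_ ?_ ?_ ?_ ?_ <;>
      rintro ⟨a, b⟩ hp <;> simp only [mem_sigma, mem_range] at *
  · omega
  · omega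
  · rw [Nat.add_sub_cancel_left]
  · rw [Nat.add_sub_cancel' (by omega : b ≤ a)]
  · congr 1; omega

private lemma rhs_eval' {R : Type*} [CommRing R] {A : Type*} [CommRing A] [Algebra R A]
    (n : ℕ) (u : ℤ → R) (z : A) :
    z * Polynomial.aeval z (Polynomial.derivative (hGen R n u))
      - Polynomial.aeval z (hGen R n u)
      = ∑ k ∈ range (n + 1), ((n : ℤ) - k - 1) • (algebraMap R A (u k) * z ^ (n - k)) := by
  unfold hGen
  rw [map_sum, map_sum, map_sum, Finset.mul_sum, ← Finset.sum_sub_distrib]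
  refine Finset.sum_congr rfl fun k hk => ?_
  simp only [mem_range] at hk
  simp only [Polynomial.derivative_C_mul, Polynomial.derivative_X_pow, map_mul,
    Polynomial.aeval_C, Polynomial.aeval_X_pow, map_natCast, Polynomial.aeval_natCast]
  rcases Nat.lt_or_ge k n with h | h
  · have hm : n - k - 1 + 1 = n - k := by omega
    have hc : ((n : ℤ) - k - 1) • (algebraMap R A (u k) * z ^ (n - k))
        = (((n - k : ℕ) : A) - 1) * (algebraMap R A (u k) * z ^ (n - k)) := by
      rw [zsmul_eq_mul]
      push_cast [Nat.cast_sub h.le]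
      ring
    have hz : z ^ (n - k) = z * z ^ (n - k - 1) := by conv_lhs => rw [← hm, pow_succ']
    rw [hc, hz]
    ring
  · have hk' : k = n := by omega
    subst hk'
    simp [zsmul_eq_mul]

/-- the generating-function identity for the Saito bilinear form.
With `h(x) = Σ_{k=0}^n u_k x^{n-k}` (and `u_m = 0` for `m < 0`), in `R[x,y]`:
`(x - y) Σ_{i,j=1}^n (2n-i-j) u_{i+j-n-1} x^{n-i} y^{n-j}
  = x h'(x) - y h'(y) - h(x) + h(y)`. -/
theorem saito_form_generating_function (n : ℕ) (hn : 2 ≤ n)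
    (R : Type*) [CommRing R] (u : ℤ → R) (hu : ∀ m : ℤ, m < 0 → u m = 0) :
    letI x : MvPolynomial (Fin 2) R := MvPolynomial.X 0
    letI y : MvPolynomial (Fin 2) R := MvPolynomial.X 1
    (x - y) *
        ∑ i ∈ Finset.Icc 1 n, ∑ j ∈ Finset.Icc 1 n,
          (2 * (n : ℤ) - i - j) •
            (MvPolynomial.C (u ((i : ℤ) + j - n - 1)) * x ^ (n - i) * y ^ (n - j)) =
      x * Polynomial.aeval x (Polynomial.derivative (hGen R n u)) -
        y * Polynomial.aeval y (Polynomial.derivative (hGen R n u)) -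
        Polynomial.aeval x (hGen R n u) + Polynomial.aeval y (hGen R n u) := by
  set x : MvPolynomial (Fin 2) R := MvPolynomial.X 0 with hxdef
  set y : MvPolynomial (Fin 2) R := MvPolynomial.X 1 with hydef
  -- Step 1: rewrite the double sum into the triangular form
  have hL : (∑ i ∈ Finset.Icc 1 n, ∑ j ∈ Finset.Icc 1 n,
        (2 * (n : ℤ) - i - j) •
          (MvPolynomial.C (u ((i : ℤ) + j - n - 1)) * x ^ (n - i) * y ^ (n - j)))
      = ∑ s ∈ range n, (s : ℤ) •
          (MvPolynomial.C (u ((n : ℤ) - 1 - s)) *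
            ∑ a ∈ range (s + 1), x ^ a * y ^ (s + 1 - 1 - a)) := by
    rw [sum_Icc_reindex']
    rw [Finset.sum_congr rfl fun a _ => sum_Icc_reindex' n
      (fun j => (2 * (n : ℤ) - ((n - a : ℕ) : ℤ) - j) •
        (MvPolynomial.C (u (((n - a : ℕ) : ℤ) + j - n - 1)) *
          x ^ (n - (n - a)) * y ^ (n - j)))]
    have h1 : ∀ a ∈ range n, (∑ b ∈ range n,
        (2 * (n : ℤ) - ((n - a : ℕ) : ℤ) - ((n - b : ℕ) : ℤ)) •
          (MvPolynomial.C (u (((n - a : ℕ) : ℤ) + ((n - b : ℕ) : ℤ) - n - 1)) *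
            x ^ (n - (n - a)) * y ^ (n - (n - b))))
        = ∑ b ∈ range (n - a),
            ((a : ℤ) + b) • (MvPolynomial.C (u ((n : ℤ) - a - b - 1)) * x ^ a * y ^ b) := by
      intro a ha
      simp only [mem_range] at ha
      have h2 : ∀ b ∈ range n,
          (2 * (n : ℤ) - ((n - a : ℕ) : ℤ) - ((n - b : ℕ) : ℤ)) •
            (MvPolynomial.C (u (((n - a : ℕ) : ℤ) + ((n - b : ℕ) : ℤ) - n - 1)) *
              x ^ (n - (n - a)) * y ^ (n - (n - b)))
          = ((a : ℤ) + b) • (MvPolynomial.C (u ((n : ℤ) - a - b - 1)) * x ^ a * y ^ b) := by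
        intro b hb
        simp only [mem_range] at hb
        have c1 : (2 * (n : ℤ) - ((n - a : ℕ) : ℤ) - ((n - b : ℕ) : ℤ)) = (a : ℤ) + b := by
          omega
        have c2 : (((n - a : ℕ) : ℤ) + ((n - b : ℕ) : ℤ) - n - 1) = (n : ℤ) - a - b - 1 := by
          omega
        have c3 : n - (n - a) = a := by omega
        have c4 : n - (n - b) = b := by omega
        rw [c1, c2, c3, c4]
      rw [Finset.sum_congr rfl h2]
      refine (Finset.sum_subset (Finset.range_subset_range.2 (by omega)) ?_).symm
      intro b hb hnb
      simp only [mem_range] at hb hnb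
      have : u ((n : ℤ) - a - b - 1) = 0 := hu _ (by omega)
      rw [this, map_zero, zero_mul, zero_mul, smul_zero]
    rw [Finset.sum_congr rfl h1, tri_sum']
    refine Finset.sum_congr rfl fun s hs => ?_
    simp only [mem_range] at hs
    have h3 : ∀ a ∈ range (s + 1),
        ((a : ℤ) + (s - a : ℕ)) •
          (MvPolynomial.C (u ((n : ℤ) - a - (s - a : ℕ) - 1)) * x ^ a * y ^ (s - a))
        = (s : ℤ) • (MvPolynomial.C (u ((n : ℤ) - 1 - s)) *
            (x ^ a * y ^ (s + 1 - 1 - a))) := by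
      intro a ha
      simp only [mem_range] at ha
      have d1 : ((a : ℤ) + (s - a : ℕ)) = (s : ℤ) := by omega
      have d2 : ((n : ℤ) - a - (s - a : ℕ) - 1) = (n : ℤ) - 1 - s := by omega
      have d3 : s + 1 - 1 - a = s - a := by omega
      rw [d1, d2, d3, mul_assoc]
    rw [Finset.sum_congr rfl h3, ← Finset.smul_sum, ← Finset.mul_sum]
  rw [hL]
  -- Step 2: multiply by (x - y) and apply the geometric sum identity
  rw [Finset.mul_sum]
  have hgeom : ∀ s ∈ range n,
      (x - y) * ((s : ℤ) • (MvPolynomial.C (u ((n : ℤ) - 1 - s)) * ∑ a ∈ range (s + 1),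
          x ^ a * y ^ (s + 1 - 1 - a)))
      = (s : ℤ) • (MvPolynomial.C (u ((n : ℤ) - 1 - s)) * (x ^ (s + 1) - y ^ (s + 1))) := by
    intro s _
    rw [mul_smul_comm, mul_left_comm, (Commute.all x y).mul_geom_sum₂ (s + 1)]
  rw [Finset.sum_congr rfl hgeom]
  -- Step 3: evaluate the right-hand side
  have hx := rhs_eval' (A := MvPolynomial (Fin 2) R) n u x
  have hy := rhs_eval' (A := MvPolynomial (Fin 2) R) n u y
  rw [MvPolynomial.algebraMap_eq] at hx hy
  have hrefl := Finset.sum_range_reflect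
    (fun k => ((n : ℤ) - k - 1) •
      (MvPolynomial.C (u k) * (x ^ (n - k) - y ^ (n - k)))) n
  have hcomb : (∑ s ∈ range n, (s : ℤ) •
        (MvPolynomial.C (u ((n : ℤ) - 1 - s)) * (x ^ (s + 1) - y ^ (s + 1))))
      = (∑ k ∈ range (n + 1), ((n : ℤ) - k - 1) • (MvPolynomial.C (u k) * x ^ (n - k)))
        - ∑ k ∈ range (n + 1), ((n : ℤ) - k - 1) • (MvPolynomial.C (u k) * y ^ (n - k)) := by
    rw [← Finset.sum_sub_distrib, Finset.sum_range_succ]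
    have hlast : ((n : ℤ) - n - 1) • (MvPolynomial.C (u n) * x ^ (n - n))
        - ((n : ℤ) - n - 1) • (MvPolynomial.C (u n) * y ^ (n - n)) = 0 := by
      simp
    rw [hlast, add_zero]
    have hmerge : ∀ k ∈ range n,
        ((n : ℤ) - k - 1) • (MvPolynomial.C (u k) * x ^ (n - k))
          - ((n : ℤ) - k - 1) • (MvPolynomial.C (u k) * y ^ (n - k))
        = ((n : ℤ) - k - 1) •
            (MvPolynomial.C (u k) * (x ^ (n - k) - y ^ (n - k))) := by
      intro k _
      rw [← smul_sub, ← mul_sub]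
    rw [Finset.sum_congr rfl hmerge, ← hrefl]
    refine Finset.sum_congr rfl fun s hs => ?_
    simp only [mem_range] at hs
    have e1 : ((n : ℤ) - ((n - 1 - s : ℕ) : ℤ) - 1) = (s : ℤ) := by omega
    have e2 : (((n - 1 - s : ℕ) : ℤ)) = (n : ℤ) - 1 - s := by omega
    have e3 : n - (n - 1 - s) = s + 1 := by omega
    rw [e1, e2, e3]
  rw [hcomb]
  linear_combination hy - hx
end

section
/- Fix an integer n ≥ 2 and let u_1,…,u_n be independent variables over ℚ, with conventions u_0 := 1 and u_m := 0 for m < 0 or m > n. Define η^{ij} := 4(2n − i − j) u_{i+j−n−1} and define a^{ij}_k := 4(n − j) if k = i + j − n − 1 and 1 ≤ k ≤ n, and a^{ij}_k := 0 otherwise. Then for all i,j,k,l ∈ {1,…,n}: (1) ∂η^{ij}/∂u_k = a^{ij}_k + a^{ji}_k; (2) Σ_{s=1}^n η^{is} a^{jk}_s = Σ_{s=1}^n η^{js} a^{ik}_s; (3) Σ_{s=1}^n a^{ij}_s a^{sk}_l = Σ_{s=1}^n a^{ik}_s a^{sj}_l. Hence the a^{ij}_k are the contravariant Christoffel symbols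 of the flat Saito metric η in the coordinates (u_1,…,u_n), and they satisfy the zero-curvature quadratic relations. -/
open MvPolynomial

/-- `u_m` for `m ∈ ℤ`: the independent variable `u_m` for `1 ≤ m ≤ n`,
`u_0 = 1` and `u_m = 0` for `m < 0` or `m > n`. -/
noncomputable def Uvar (n : ℕ) (m : ℤ) : MvPolynomial (Fin n) ℚ :=
  if m = 0 then 1
  else if h : 1 ≤ m ∧ m ≤ n then X ⟨(m - 1).toNat, by omega⟩
  else 0

/-- The Saito bilinear form `η^{ij} = 4(2n - i - j) u_{i+j-n-1}`
(1-based indices `i.1 + 1`, `j.1 + 1`). -/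
noncomputable def etaB (n : ℕ) (i j : Fin n) : MvPolynomial (Fin n) ℚ :=
  C (4 * (2 * (n : ℚ) - (i.1 + 1) - (j.1 + 1))) *
    Uvar n ((i.1 : ℤ) + 1 + ((j.1 : ℤ) + 1) - n - 1)

/-- The contravariant Christoffel symbols of the Saito metric:
`a^{ij}_k = 4(n - j)` if `k = i + j - n - 1` (1-based, with `1 ≤ k ≤ n`),
`0` otherwise. -/
noncomputable def aB (n : ℕ) (i j k : Fin n) : MvPolynomial (Fin n) ℚ :=
  if k.1 + n = i.1 + j.1 then C (4 * ((n : ℚ) - (j.1 + 1))) else 0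

/-- Summing a function supported at the single index `s` with `s.1 + n = t`. -/
lemma sum_ite_fin {M : Type*} [AddCommMonoid M] (n t : ℕ) (f : Fin n → M) :
    ∑ s : Fin n, (if s.1 + n = t then f s else 0) =
    if h : n ≤ t ∧ t - n < n then f ⟨t - n, h.2⟩ else 0 := by
  split
  next h =>
    rw [Finset.sum_eq_single (⟨t - n, h.2⟩ : Fin n)]
    · rw [if_pos (by simp only [Fin.val_mk]; omega)]
    · intro b _ hb
      rw [if_neg]
      exact fun hc => hb (Fin.ext (by simp only [Fin.val_mk]; omega))
    · intro h'; exact absurd (Finset.mem_univ _) h'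
  next h =>
    apply Finset.sum_eq_zero
    intro s _
    rw [if_neg]
    exact fun hc => h ⟨by omega, by omega⟩

/-- the `a^{ij}_k` are the contravariant Christoffel symbols of the
flat Saito metric `η` in the coordinates `u`:
(1) `∂η^{ij}/∂u_k = a^{ij}_k + a^{ji}_k`;
(2) `Σ_s η^{is} a^{jk}_s = Σ_s η^{js} a^{ik}_s`;
(3) `Σ_s a^{ij}_s a^{sk}_l = Σ_s a^{ik}_s a^{sj}_l` (zero curvature). -/
theorem saito_christoffel_symbols (n : ℕ) (hn : 2 ≤ n) :
    (∀ i j k : Fin n, pderiv k (etaB n i j) = aB n i j k + aB n j i k) ∧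
    (∀ i j k : Fin n,
      ∑ s : Fin n, etaB n i s * aB n j k s =
      ∑ s : Fin n, etaB n j s * aB n i k s) ∧
    (∀ i j k l : Fin n,
      ∑ s : Fin n, aB n i j s * aB n s k l =
      ∑ s : Fin n, aB n i k s * aB n s j l) := by
  refine ⟨?_, ?_, ?_⟩
  · -- (1)
    intro i j k
    have hi := i.isLt; have hj := j.isLt; have hk' := k.isLt
    by_cases hij : n ≤ i.1 + j.1
    · have hU : Uvar n ((i.1 : ℤ) + 1 + ((j.1 : ℤ) + 1) - n - 1)
          = X (⟨i.1 + j.1 - n, by omega⟩ : Fin n) := by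
        unfold Uvar
        rw [if_neg (by omega), dif_pos ⟨by omega, by omega⟩]
        congr 1
        exact Fin.ext (by simp only [Fin.val_mk]; omega)
      rw [etaB, hU, pderiv_C_mul]
      classical
      rw [pderiv_X]
      unfold aB
      by_cases hk : k.1 + n = i.1 + j.1
      · have hkk : k = (⟨i.1 + j.1 - n, by omega⟩ : Fin n) :=
          Fin.ext (by simp only [Fin.val_mk]; omega)
        rw [if_pos hk, if_pos (by omega), ← hkk, Pi.single_eq_same, mul_one, ← C_add]
        congr 1
        push_cast
        ring
      · rw [if_neg hk, if_neg (by omega),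
          Pi.single_eq_of_ne (fun hc => hk (by
            have := congrArg Fin.val hc
            simp only [Fin.val_mk] at this
            omega)), mul_zero, add_zero]
    · have hU : pderiv k (etaB n i j) = 0 := by
        unfold etaB Uvar
        by_cases h0 : (i.1 : ℤ) + 1 + ((j.1 : ℤ) + 1) - n - 1 = 0
        · rw [if_pos h0, mul_one, pderiv_C]
        · rw [if_neg h0, dif_neg (by omega), mul_zero, map_zero]
      rw [hU]
      unfold aB
      rw [if_neg (by omega), if_neg (by omega), add_zero]
  · -- (2)
    intro i j k
    have hi := i.isLt; have hj := j.isLt; have hk' := k.isLt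
    simp only [aB, mul_ite, mul_zero]
    rw [sum_ite_fin, sum_ite_fin]
    split_ifs with h1 h2 h2
    · unfold etaB
      have e1 : ((i.1 : ℤ) + 1 + (((⟨j.1 + k.1 - n, h1.2⟩ : Fin n).1 : ℤ) + 1) - n - 1)
          = ((j.1 : ℤ) + 1 + (((⟨i.1 + k.1 - n, h2.2⟩ : Fin n).1 : ℤ) + 1) - n - 1) := by
        simp only [Fin.val_mk]
        omega
      rw [e1]
      have e2 : (4 * (2 * (n : ℚ) - (i.1 + 1) - (((⟨j.1 + k.1 - n, h1.2⟩ : Fin n).1 : ℚ) + 1)))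
          = (4 * (2 * (n : ℚ) - (j.1 + 1) - (((⟨i.1 + k.1 - n, h2.2⟩ : Fin n).1 : ℚ) + 1))) := by
        simp only [Fin.val_mk]
        rw [Nat.cast_sub (by omega), Nat.cast_sub (by omega)]
        push_cast
        ring
      rw [e2]
    · unfold etaB Uvar
      rw [if_neg (by simp only [Fin.val_mk]; omega),
        dif_neg (by simp only [Fin.val_mk]; omega), mul_zero, zero_mul]
    · unfold etaB Uvar
      rw [if_neg (by simp only [Fin.val_mk]; omega),
        dif_neg (by simp only [Fin.val_mk]; omega), mul_zero, zero_mul]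
    · rfl
  · -- (3)
    intro i j k l
    have hi := i.isLt; have hj := j.isLt; have hk' := k.isLt; have hl := l.isLt
    simp only [aB, ite_mul, zero_mul]
    rw [sum_ite_fin, sum_ite_fin]
    split_ifs <;> simp only [Fin.val_mk] at *
    all_goals
      first
        | exact mul_comm _ _
        | (exfalso; omega)
        | simp only [mul_zero, zero_mul]
end

section
/- Let F : {(u_1,u_2,u_3) ∈ ℝ³ : u_3 > 0} → ℝ be defined by F(u) = (1/6)u_2³ + u_1 u_2 u_3 + (1/12)u_1³ u_3 − (3/2)u_3² + u_3² ln u_3, and let η^{il} := δ_{i+l,4} (the anti-diagonal 3×3 identity). Then F is a solution of the WDVV associativity equations with invariant metric η and unit e = ∂/∂u_2: for all j,h,k,m ∈ {1,2,3} and all u with u_3 > 0, Σ_{i,l=1}^3 (∂³F/∂u_j ∂u_h ∂u_i) η^{il} (∂³F/∂u_l ∂u_k ∂u_m) = Σ_{i,l=1}^3 (∂³F/∂u_j ∂u_k ∂u_i) η^{il} (∂³F/∂u_l ∂u_h ∂u_m); moreover Σ_{l=1}^3 η^{il} ∂³F/∂u_l ∂u_j ∂u_2 = δ_{ij} for all i,j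 (so ∂/∂u_2 is the unit of the induced product). This is the prepotential of the NLS-type Dubrovin-Frobenius structure on the orbit space of B_3. -/
/-- The prepotential of the NLS-type Dubrovin-Frobenius structure on the orbit
space of `B_3`:
`F = (1/6)u_2³ + u_1 u_2 u_3 + (1/12)u_1³ u_3 - (3/2)u_3² + u_3² ln u_3`
(indices shifted: `u_1 = u 0`, `u_2 = u 1`, `u_3 = u 2`). -/
noncomputable def FB3 (u : Fin 3 → ℝ) : ℝ :=
  (1 / 6) * (u 1) ^ 3 + u 0 * u 1 * u 2 + (1 / 12) * (u 0) ^ 3 * u 2 -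
    (3 / 2) * (u 2) ^ 2 + (u 2) ^ 2 * Real.log (u 2)

/-- The anti-diagonal metric `η^{il} = δ_{i+l,4}` (1-based), i.e. `δ_{i+l,2}` in
0-based `Fin 3` indices. -/
def etaB3 (i l : Fin 3) : ℝ := if i.1 + l.1 = 2 then 1 else 0


-- update evaluation lemmas
lemma upd01 (p : Fin 3 → ℝ) (t : ℝ) : Function.update p 0 t 1 = p 1 := Function.update_of_ne (by decide) t p
lemma upd02 (p : Fin 3 → ℝ) (t : ℝ) : Function.update p 0 t 2 = p 2 := Function.update_of_ne (by decide) t p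
lemma upd10 (p : Fin 3 → ℝ) (t : ℝ) : Function.update p 1 t 0 = p 0 := Function.update_of_ne (by decide) t p
lemma upd12 (p : Fin 3 → ℝ) (t : ℝ) : Function.update p 1 t 2 = p 2 := Function.update_of_ne (by decide) t p
lemma upd20 (p : Fin 3 → ℝ) (t : ℝ) : Function.update p 2 t 0 = p 0 := Function.update_of_ne (by decide) t p
lemma upd21 (p : Fin 3 → ℝ) (t : ℝ) : Function.update p 2 t 1 = p 1 := Function.update_of_ne (by decide) t p

-- first derivatives
noncomputable def g0 (q : Fin 3 → ℝ) : ℝ := q 1 * q 2 + 1/4 * q 0 ^ 2 * q 2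
noncomputable def g1 (q : Fin 3 → ℝ) : ℝ := 1/2 * q 1 ^ 2 + q 0 * q 2
noncomputable def g2 (q : Fin 3 → ℝ) : ℝ :=
  q 0 * q 1 + 1/12 * q 0 ^ 3 - 2 * q 2 + 2 * q 2 * Real.log (q 2)

-- second derivatives
noncomputable def hA (q : Fin 3 → ℝ) : ℝ := 1/2 * q 0 * q 2
noncomputable def hB (q : Fin 3 → ℝ) : ℝ := q 2
noncomputable def hC (q : Fin 3 → ℝ) : ℝ := q 1 + 1/4 * q 0 ^ 2
noncomputable def hD (q : Fin 3 → ℝ) : ℝ := q 1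
noncomputable def hE (q : Fin 3 → ℝ) : ℝ := q 0
noncomputable def hL (q : Fin 3 → ℝ) : ℝ := 2 * Real.log (q 2)

noncomputable def gF : Fin 3 → (Fin 3 → ℝ) → ℝ := ![g0, g1, g2]
noncomputable def hF : Fin 3 → Fin 3 → (Fin 3 → ℝ) → ℝ := ![![hA, hB, hC], ![hB, hD, hE], ![hC, hE, hL]]
noncomputable def TF (a b c : Fin 3) (q : Fin 3 → ℝ) : ℝ :=
  ![![![q 2 / 2, 0, q 0 / 2], ![0, 0, 1], ![q 0 / 2, 1, 0]],
    ![![0, 0, 1], ![0, 1, 0], ![1, 0, 0]],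
    ![![q 0 / 2, 1, 0], ![1, 0, 0], ![0, 0, 2 / q 2]]] a b c

-- Stage 1
lemma s1_0 (p : Fin 3 → ℝ) (_ : 0 < p 2) : pd 0 FB3 p = g0 p := by
  simp only [pd, FB3, g0, Function.update_self, upd01, upd02]
  have h : HasDerivAt (fun t : ℝ => 1 / 6 * p 1 ^ 3 + t * p 1 * p 2 + 1 / 12 * t ^ 3 * p 2 -
      3 / 2 * p 2 ^ 2 + p 2 ^ 2 * Real.log (p 2))
      ((0 + 1 * p 1 * p 2 + 1/12 * (((3:ℕ):ℝ) * p 0 ^ 2) * p 2 - 0) + 0) (p 0) :=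
    ((((hasDerivAt_const (p 0) (1/6 * p 1 ^ 3)).add
      (((hasDerivAt_id (p 0)).mul_const (p 1)).mul_const (p 2))).add
      (((hasDerivAt_pow 3 (p 0)).const_mul (1/12 : ℝ)).mul_const (p 2))).sub
      (hasDerivAt_const (p 0) (3/2 * p 2 ^ 2))).add
      (hasDerivAt_const (p 0) (p 2 ^ 2 * Real.log (p 2)))
  rw [h.deriv]; push_cast; ring

lemma s1_1 (p : Fin 3 → ℝ) (_ : 0 < p 2) : pd 1 FB3 p = g1 p := by
  simp only [pd, FB3, g1, Function.update_self, upd10, upd12]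
  have h : HasDerivAt (fun t : ℝ => 1 / 6 * t ^ 3 + p 0 * t * p 2 + 1 / 12 * p 0 ^ 3 * p 2 -
      3 / 2 * p 2 ^ 2 + p 2 ^ 2 * Real.log (p 2))
      ((1/6 * (((3:ℕ):ℝ) * p 1 ^ 2) + p 0 * 1 * p 2 + 0 - 0) + 0) (p 1) :=
    ((((((hasDerivAt_pow 3 (p 1)).const_mul (1/6 : ℝ))).add
      (((hasDerivAt_id (p 1)).const_mul (p 0)).mul_const (p 2))).add
      (hasDerivAt_const (p 1) (1/12 * p 0 ^ 3 * p 2))).sub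
      (hasDerivAt_const (p 1) (3/2 * p 2 ^ 2))).add
      (hasDerivAt_const (p 1) (p 2 ^ 2 * Real.log (p 2)))
  rw [h.deriv]; push_cast; ring

lemma s1_2 (p : Fin 3 → ℝ) (hp : 0 < p 2) : pd 2 FB3 p = g2 p := by
  simp only [pd, FB3, g2, Function.update_self, upd20, upd21]
  have h : HasDerivAt (fun t : ℝ => 1 / 6 * p 1 ^ 3 + p 0 * p 1 * t + 1 / 12 * p 0 ^ 3 * t -
      3 / 2 * t ^ 2 + t ^ 2 * Real.log t)
      ((0 + p 0 * p 1 * 1 + 1/12 * p 0 ^ 3 * 1 - 3/2 * (((2:ℕ):ℝ) * p 2 ^ 1)) +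
        ((((2:ℕ):ℝ) * p 2 ^ 1) * Real.log (p 2) + p 2 ^ 2 * (p 2)⁻¹)) (p 2) :=
    ((((hasDerivAt_const (p 2) (1/6 * p 1 ^ 3)).add
      ((hasDerivAt_id (p 2)).const_mul (p 0 * p 1))).add
      ((hasDerivAt_id (p 2)).const_mul (1/12 * p 0 ^ 3))).sub
      ((hasDerivAt_pow 2 (p 2)).const_mul (3/2 : ℝ))).add
      ((hasDerivAt_pow 2 (p 2)).mul (Real.hasDerivAt_log hp.ne'))
  rw [h.deriv]; push_cast; field_simp; ring

lemma stage1 (c : Fin 3) (q : Fin 3 → ℝ) (hq : 0 < q 2) : pd c FB3 q = gF c q := by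
  fin_cases c
  · exact s1_0 q hq
  · exact s1_1 q hq
  · exact s1_2 q hq

-- Stage 2
lemma s2_00 (p : Fin 3 → ℝ) (_ : 0 < p 2) : pd 0 g0 p = hA p := by
  simp only [pd, g0, hA, Function.update_self, upd01, upd02]
  have h : HasDerivAt (fun t : ℝ => p 1 * p 2 + 1 / 4 * t ^ 2 * p 2)
      (0 + 1/4 * (((2:ℕ):ℝ) * p 0 ^ 1) * p 2) (p 0) :=
    (hasDerivAt_const (p 0) (p 1 * p 2)).add
      (((hasDerivAt_pow 2 (p 0)).const_mul (1/4 : ℝ)).mul_const (p 2))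
  rw [h.deriv]; push_cast; ring

lemma s2_10 (p : Fin 3 → ℝ) (_ : 0 < p 2) : pd 1 g0 p = hB p := by
  simp only [pd, g0, hB, Function.update_self, upd10, upd12]
  have h : HasDerivAt (fun t : ℝ => t * p 2 + 1 / 4 * p 0 ^ 2 * p 2) (1 * p 2 + 0) (p 1) :=
    ((hasDerivAt_id (p 1)).mul_const (p 2)).add (hasDerivAt_const (p 1) (1/4 * p 0 ^ 2 * p 2))
  rw [h.deriv]; ring

lemma s2_20 (p : Fin 3 → ℝ) (_ : 0 < p 2) : pd 2 g0 p = hC p := by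
  simp only [pd, g0, hC, Function.update_self, upd20, upd21]
  have h : HasDerivAt (fun t : ℝ => p 1 * t + 1 / 4 * p 0 ^ 2 * t)
      (p 1 * 1 + (1/4 * p 0 ^ 2) * 1) (p 2) :=
    ((hasDerivAt_id (p 2)).const_mul (p 1)).add ((hasDerivAt_id (p 2)).const_mul (1/4 * p 0 ^ 2))
  rw [h.deriv]; ring

lemma s2_01 (p : Fin 3 → ℝ) (_ : 0 < p 2) : pd 0 g1 p = hB p := by
  simp only [pd, g1, hB, Function.update_self, upd01, upd02]
  have h : HasDerivAt (fun t : ℝ => 1 / 2 * p 1 ^ 2 + t * p 2) (0 + 1 * p 2) (p 0) :=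
    (hasDerivAt_const (p 0) (1/2 * p 1 ^ 2)).add ((hasDerivAt_id (p 0)).mul_const (p 2))
  rw [h.deriv]; ring

lemma s2_11 (p : Fin 3 → ℝ) (_ : 0 < p 2) : pd 1 g1 p = hD p := by
  simp only [pd, g1, hD, Function.update_self, upd10, upd12]
  have h : HasDerivAt (fun t : ℝ => 1 / 2 * t ^ 2 + p 0 * p 2)
      (1/2 * (((2:ℕ):ℝ) * p 1 ^ 1) + 0) (p 1) :=
    ((hasDerivAt_pow 2 (p 1)).const_mul (1/2 : ℝ)).add (hasDerivAt_const (p 1) (p 0 * p 2))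
  rw [h.deriv]; push_cast; ring

lemma s2_21 (p : Fin 3 → ℝ) (_ : 0 < p 2) : pd 2 g1 p = hE p := by
  simp only [pd, g1, hE, Function.update_self, upd20, upd21]
  have h : HasDerivAt (fun t : ℝ => 1 / 2 * p 1 ^ 2 + p 0 * t) (0 + p 0 * 1) (p 2) :=
    (hasDerivAt_const (p 2) (1/2 * p 1 ^ 2)).add ((hasDerivAt_id (p 2)).const_mul (p 0))
  rw [h.deriv]; ring

lemma s2_02 (p : Fin 3 → ℝ) (_ : 0 < p 2) : pd 0 g2 p = hC p := by
  simp only [pd, g2, hC, Function.update_self, upd01, upd02]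
  have h : HasDerivAt (fun t : ℝ => t * p 1 + 1 / 12 * t ^ 3 - 2 * p 2 + 2 * p 2 * Real.log (p 2))
      ((1 * p 1 + 1/12 * (((3:ℕ):ℝ) * p 0 ^ 2) - 0) + 0) (p 0) :=
    ((((hasDerivAt_id (p 0)).mul_const (p 1)).add
      ((hasDerivAt_pow 3 (p 0)).const_mul (1/12 : ℝ))).sub
      (hasDerivAt_const (p 0) (2 * p 2))).add
      (hasDerivAt_const (p 0) (2 * p 2 * Real.log (p 2)))
  rw [h.deriv]; push_cast; ring

lemma s2_12 (p : Fin 3 → ℝ) (_ : 0 < p 2) : pd 1 g2 p = hE p := by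
  simp only [pd, g2, hE, Function.update_self, upd10, upd12]
  have h : HasDerivAt (fun t : ℝ => p 0 * t + 1 / 12 * p 0 ^ 3 - 2 * p 2 + 2 * p 2 * Real.log (p 2))
      ((p 0 * 1 + 0 - 0) + 0) (p 1) :=
    ((((hasDerivAt_id (p 1)).const_mul (p 0)).add
      (hasDerivAt_const (p 1) (1/12 * p 0 ^ 3))).sub
      (hasDerivAt_const (p 1) (2 * p 2))).add
      (hasDerivAt_const (p 1) (2 * p 2 * Real.log (p 2)))
  rw [h.deriv]; ring

lemma s2_22 (p : Fin 3 → ℝ) (hp : 0 < p 2) : pd 2 g2 p = hL p := by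
  simp only [pd, g2, hL, Function.update_self, upd20, upd21]
  have h : HasDerivAt (fun t : ℝ => p 0 * p 1 + 1 / 12 * p 0 ^ 3 - 2 * t + 2 * t * Real.log t)
      ((0 - 2 * 1) + ((2 * 1) * Real.log (p 2) + 2 * p 2 * (p 2)⁻¹)) (p 2) :=
    (((hasDerivAt_const (p 2) (p 0 * p 1 + 1/12 * p 0 ^ 3)).sub
      ((hasDerivAt_id (p 2)).const_mul (2:ℝ))).add
      (((hasDerivAt_id (p 2)).const_mul (2:ℝ)).mul (Real.hasDerivAt_log hp.ne')))
  rw [h.deriv]; field_simp; ring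

lemma stage2 (b c : Fin 3) (q : Fin 3 → ℝ) (hq : 0 < q 2) : pd b (gF c) q = hF b c q := by
  fin_cases b <;> fin_cases c
  · exact s2_00 q hq
  · exact s2_01 q hq
  · exact s2_02 q hq
  · exact s2_10 q hq
  · exact s2_11 q hq
  · exact s2_12 q hq
  · exact s2_20 q hq
  · exact s2_21 q hq
  · exact s2_22 q hq

-- Stage 3
lemma s3_A0 (p : Fin 3 → ℝ) (_ : 0 < p 2) : pd 0 hA p = p 2 / 2 := by
  simp only [pd, hA, Function.update_self, upd01, upd02]
  have h : HasDerivAt (fun t : ℝ => 1 / 2 * t * p 2) ((1/2 * 1) * p 2) (p 0) :=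
    ((hasDerivAt_id (p 0)).const_mul (1/2 : ℝ)).mul_const (p 2)
  rw [h.deriv]; ring

lemma s3_A1 (p : Fin 3 → ℝ) (_ : 0 < p 2) : pd 1 hA p = 0 := by
  simp only [pd, hA, Function.update_self, upd10, upd12]
  exact deriv_const (p 1) _

lemma s3_A2 (p : Fin 3 → ℝ) (_ : 0 < p 2) : pd 2 hA p = p 0 / 2 := by
  simp only [pd, hA, Function.update_self, upd20, upd21]
  have h : HasDerivAt (fun t : ℝ => 1 / 2 * p 0 * t) ((1/2 * p 0) * 1) (p 2) :=
    (hasDerivAt_id (p 2)).const_mul (1/2 * p 0)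
  rw [h.deriv]; ring

lemma s3_B0 (p : Fin 3 → ℝ) (_ : 0 < p 2) : pd 0 hB p = 0 := by
  simp only [pd, hB, Function.update_self, upd01, upd02]
  exact deriv_const (p 0) _

lemma s3_B1 (p : Fin 3 → ℝ) (_ : 0 < p 2) : pd 1 hB p = 0 := by
  simp only [pd, hB, Function.update_self, upd10, upd12]
  exact deriv_const (p 1) _

lemma s3_B2 (p : Fin 3 → ℝ) (_ : 0 < p 2) : pd 2 hB p = 1 := by
  simp only [pd, hB, Function.update_self]
  exact deriv_id (p 2)

lemma s3_C0 (p : Fin 3 → ℝ) (_ : 0 < p 2) : pd 0 hC p = p 0 / 2 := by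
  simp only [pd, hC, Function.update_self, upd01, upd02]
  have h : HasDerivAt (fun t : ℝ => p 1 + 1 / 4 * t ^ 2)
      (0 + 1/4 * (((2:ℕ):ℝ) * p 0 ^ 1)) (p 0) :=
    (hasDerivAt_const (p 0) (p 1)).add ((hasDerivAt_pow 2 (p 0)).const_mul (1/4 : ℝ))
  rw [h.deriv]; push_cast; ring

lemma s3_C1 (p : Fin 3 → ℝ) (_ : 0 < p 2) : pd 1 hC p = 1 := by
  simp only [pd, hC, Function.update_self, upd10, upd12]
  have h : HasDerivAt (fun t : ℝ => t + 1 / 4 * p 0 ^ 2) (1 + 0) (p 1) :=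
    (hasDerivAt_id (p 1)).add (hasDerivAt_const (p 1) (1/4 * p 0 ^ 2))
  rw [h.deriv]; ring

lemma s3_C2 (p : Fin 3 → ℝ) (_ : 0 < p 2) : pd 2 hC p = 0 := by
  simp only [pd, hC, Function.update_self, upd20, upd21]
  exact deriv_const (p 2) _

lemma s3_D0 (p : Fin 3 → ℝ) (_ : 0 < p 2) : pd 0 hD p = 0 := by
  simp only [pd, hD, Function.update_self, upd01, upd02]
  exact deriv_const (p 0) _

lemma s3_D1 (p : Fin 3 → ℝ) (_ : 0 < p 2) : pd 1 hD p = 1 := by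
  simp only [pd, hD, Function.update_self]
  exact deriv_id (p 1)

lemma s3_D2 (p : Fin 3 → ℝ) (_ : 0 < p 2) : pd 2 hD p = 0 := by
  simp only [pd, hD, Function.update_self, upd20, upd21]
  exact deriv_const (p 2) _

lemma s3_E0 (p : Fin 3 → ℝ) (_ : 0 < p 2) : pd 0 hE p = 1 := by
  simp only [pd, hE, Function.update_self]
  exact deriv_id (p 0)

lemma s3_E1 (p : Fin 3 → ℝ) (_ : 0 < p 2) : pd 1 hE p = 0 := by
  simp only [pd, hE, Function.update_self, upd10, upd12]
  exact deriv_const (p 1) _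

lemma s3_E2 (p : Fin 3 → ℝ) (_ : 0 < p 2) : pd 2 hE p = 0 := by
  simp only [pd, hE, Function.update_self, upd20, upd21]
  exact deriv_const (p 2) _

lemma s3_L0 (p : Fin 3 → ℝ) (_ : 0 < p 2) : pd 0 hL p = 0 := by
  simp only [pd, hL, Function.update_self, upd01, upd02]
  exact deriv_const (p 0) _

lemma s3_L1 (p : Fin 3 → ℝ) (_ : 0 < p 2) : pd 1 hL p = 0 := by
  simp only [pd, hL, Function.update_self, upd10, upd12]
  exact deriv_const (p 1) _

lemma s3_L2 (p : Fin 3 → ℝ) (hp : 0 < p 2) : pd 2 hL p = 2 / p 2 := by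
  simp only [pd, hL, Function.update_self]
  have h : HasDerivAt (fun t : ℝ => 2 * Real.log t) (2 * (p 2)⁻¹) (p 2) :=
    (Real.hasDerivAt_log hp.ne').const_mul (2:ℝ)
  rw [h.deriv]; field_simp

lemma stage3 (a b c : Fin 3) (q : Fin 3 → ℝ) (hq : 0 < q 2) : pd a (hF b c) q = TF a b c q := by
  fin_cases a <;> fin_cases b <;> fin_cases c
  · exact s3_A0 q hq
  · exact s3_B0 q hq
  · exact s3_C0 q hq
  · exact s3_B0 q hq
  · exact s3_D0 q hq
  · exact s3_E0 q hq
  · exact s3_C0 q hq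
  · exact s3_E0 q hq
  · exact s3_L0 q hq
  · exact s3_A1 q hq
  · exact s3_B1 q hq
  · exact s3_C1 q hq
  · exact s3_B1 q hq
  · exact s3_D1 q hq
  · exact s3_E1 q hq
  · exact s3_C1 q hq
  · exact s3_E1 q hq
  · exact s3_L1 q hq
  · exact s3_A2 q hq
  · exact s3_B2 q hq
  · exact s3_C2 q hq
  · exact s3_B2 q hq
  · exact s3_D2 q hq
  · exact s3_E2 q hq
  · exact s3_C2 q hq
  · exact s3_E2 q hq
  · exact s3_L2 q hq

-- congruence lemmas
lemma pd_congr_pos {f g : (Fin 3 → ℝ) → ℝ} (c : Fin 3) (p : Fin 3 → ℝ) (hp : 0 < p 2)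
    (h : ∀ q : Fin 3 → ℝ, 0 < q 2 → f q = g q) : pd c f p = pd c g p := by
  simp only [pd]
  apply Filter.EventuallyEq.deriv_eq
  have hev : ∀ᶠ t in nhds (p c), 0 < Function.update p c t 2 := by
    by_cases hc : c = 2
    · subst hc
      simp only [Function.update_self]
      exact Ioi_mem_nhds hp
    · simp only [Function.update_of_ne (Ne.symm hc)]
      exact Filter.Eventually.of_forall (fun t => hp)
  exact hev.mono fun t ht => h _ ht

lemma pd3_eq {F g h : (Fin 3 → ℝ) → ℝ} {a b c : Fin 3} {u : Fin 3 → ℝ} (hu : 0 < u 2)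
    (h1 : ∀ q, 0 < q 2 → pd c F q = g q)
    (h2 : ∀ q, 0 < q 2 → pd b g q = h q) :
    pd a (pd b (pd c F)) u = pd a h u :=
  pd_congr_pos a u hu fun q hq => (pd_congr_pos b q hq h1).trans (h2 q hq)

set_option maxHeartbeats 1000000 in
/-- `F_{B_3}` solves the WDVV associativity equations with invariant
metric `η` and unit `e = ∂/∂u_2` on the half-space `u_3 > 0`. -/
theorem FB3_solves_WDVV (u : Fin 3 → ℝ) (hu : u 2 > 0) :
    (∀ j h k m : Fin 3,
      ∑ i : Fin 3, ∑ l : Fin 3,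
        pd j (pd h (pd i FB3)) u * etaB3 i l * pd l (pd k (pd m FB3)) u =
      ∑ i : Fin 3, ∑ l : Fin 3,
        pd j (pd k (pd i FB3)) u * etaB3 i l * pd l (pd h (pd m FB3)) u) ∧
    (∀ i j : Fin 3,
      ∑ l : Fin 3, etaB3 i l * pd l (pd j (pd 1 FB3)) u =
        if i = j then 1 else 0) := by
  have key : ∀ a b c : Fin 3, pd a (pd b (pd c FB3)) u = TF a b c u := fun a b c => by
    rw [pd3_eq hu (stage1 c) (stage2 b c)]
    exact stage3 a b c u hu
  have hne : u 2 ≠ 0 := ne_of_gt hu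
  constructor
  · intro j h k m
    simp only [Fin.sum_univ_three, key]
    fin_cases j <;> fin_cases h <;> fin_cases k <;> fin_cases m <;>
      (try simp [TF, etaB3, Matrix.vecHead, Matrix.vecTail]) <;>
      (try field_simp) <;> (try ring) <;> exact hne
  · intro i j
    simp only [Fin.sum_univ_three, key]
    fin_cases i <;> fin_cases j <;>
      (try simp [TF, etaB3, Matrix.vecHead, Matrix.vecTail]) <;>
      (try field_simp) <;> (try ring)
end
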